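/- arXiv:0910.4419 — 3 statements merged into one kernel-verified Lean document; each statement's English description precedes it below -/
import Mathlib

section
/- Let A and B be groups, let M be an m×m idempotent matrix over ℂ[A] and N an n×n idempotent matrix over ℂ[B]. Define HS(M)(a) = Σ_i Σ_{t ∈ [a]} (M_{ii})(t) where [a] is the conjugacy class of a, and similarly for N. Then the Kronecker product M⊗N, viewed as an idempotent matrix over ℂ[A×B] via the isomorphism ℂ[A]⊗ℂ[B] ≅ ℂ[A×B], satisfies HS(M⊗N)(a,b) = HS(M)(a)·HS(N)(b) for all (a,b) ∈ A×B. -/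
/-!
Conjugacy in `A × B` is componentwise, so the class of `(a, b)` is `[a] ×ˢ [b]`. The diagonal
entry of `M ⊗ N` at `(i, j)` is the image of `M i i ⊗ₜ N j j` in `ℂ[A × B]`, whose coefficient
at `(u, v)` is `M i i u * N j j v`; a sum of such products over `[a] ×ˢ [b]` factors, and so
does the sum over the diagonal index `(i, j)`.
-/

open TensorProduct

theorem Prod.isConj_iff {M N : Type*} [Monoid M] [Monoid N] {a u : M} {b v : N} :
    IsConj (a, b) (u, v) ↔ IsConj a u ∧ IsConj b v := by
  refine ⟨fun ⟨c, hc⟩ => ⟨⟨MulEquiv.prodUnits c |>.1, congrArg Prod.fst hc⟩,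
    ⟨MulEquiv.prodUnits c |>.2, congrArg Prod.snd hc⟩⟩, fun ⟨⟨c, hc⟩, ⟨d, hd⟩⟩ => ?_⟩
  exact ⟨MulEquiv.prodUnits.symm (c, d), Prod.ext hc hd⟩

theorem Set.indicator_prod_mul {α β R : Type*} [MulZeroClass R] (s : Set α) (t : Set β)
    (f : α → R) (g : β → R) (p : α × β) :
    (s ×ˢ t).indicator (fun p => f p.1 * g p.2) p = s.indicator f p.1 * t.indicator g p.2 := by
  classical
  simp only [Set.indicator_apply, Set.mem_prod]
  split_ifs <;> simp_all

theorem finsum_mul_finsum {α β R : Type*} [NonUnitalNonAssocSemiring R] {f : α → R} {g : β → R}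
    (hf : f.support.Finite) (hg : g.support.Finite) :
    (∑ᶠ a, f a) * ∑ᶠ b, g b = ∑ᶠ p : α × β, f p.1 * g p.2 := by
  have hfg : (fun p : α × β => f p.1 * g p.2).support.Finite :=
    (hf.prod hg).subset fun p hp => ⟨left_ne_zero_of_mul hp, right_ne_zero_of_mul hp⟩
  rw [finsum_curry _ hfg, finsum_mul' _ _ hf]
  exact finsum_congr fun a => mul_finsum' _ _ hg

theorem finsum_mem_mul_finsum_mem {α β R : Type*} [NonUnitalNonAssocSemiring R] {f : α → R}
    {g : β → R} (hf : f.support.Finite) (hg : g.support.Finite) (s : Set α) (t : Set β) :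
    (∑ᶠ a ∈ s, f a) * ∑ᶠ b ∈ t, g b = ∑ᶠ p ∈ s ×ˢ t, f p.1 * g p.2 := by
  simp only [finsum_mem_def, Set.indicator_prod_mul]
  refine finsum_mul_finsum ?_ ?_ <;> rw [Set.support_indicator]
  exacts [hf.inter_of_right s, hg.inter_of_right t]

theorem finsuppTensorFinsupp'_tmul {R ι κ : Type*} [CommSemiring R] (f : ι →₀ R) (g : κ →₀ R) :
    finsuppTensorFinsupp' R ι κ (f ⊗ₜ g) =
      f.sum fun x c => g.sum fun y d => Finsupp.single (x, y) (c * d) := by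
  conv_lhs => rw [← f.sum_single, ← g.sum_single]
  simp only [Finsupp.sum, TensorProduct.sum_tmul, TensorProduct.tmul_sum, map_sum,
    finsuppTensorFinsupp'_single_tmul_single]
  exact Finset.sum_comm

theorem stmt_7_general {A B : Type*} [Group A] [Group B] {m n : ℕ}
    (M : Matrix (Fin m) (Fin m) (MonoidAlgebra ℂ A))
    (N : Matrix (Fin n) (Fin n) (MonoidAlgebra ℂ B))
    (a : A) (b : B) :
    (∑ p : Fin m × Fin n, ∑ᶠ t ∈ {t : A × B | IsConj (a, b) t},
        ((M p.1 p.1).coeff.sum fun x cx => (N p.2 p.2).coeff.sum fun y cy =>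
          (Finsupp.single (x, y) (cx * cy) : (A × B) →₀ ℂ)) t) =
      (∑ i, ∑ᶠ t ∈ {t : A | IsConj a t}, (M i i).coeff t) *
        (∑ j, ∑ᶠ t ∈ {t : B | IsConj b t}, (N j j).coeff t) := by
  have hconj : {t : A × B | IsConj (a, b) t} = {t | IsConj a t} ×ˢ {t | IsConj b t} :=
    Set.ext fun _ => Prod.isConj_iff
  rw [Finset.sum_mul_sum, ← Finset.sum_product', Finset.univ_product_univ]
  refine Finset.sum_congr rfl fun p _ => ?_
  rw [hconj, finsum_mem_mul_finsum_mem (M p.1 p.1).coeff.hasFiniteSupport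
    (N p.2 p.2).coeff.hasFiniteSupport]
  refine finsum_mem_congr rfl fun ⟨u, v⟩ _ => ?_
  rw [← finsuppTensorFinsupp'_tmul, finsuppTensorFinsupp'_apply_apply]

/-- Multiplicativity of the Hattori–Stallings trace under Kronecker products: for
idempotent matrices `M` over `ℂ[A]` and `N` over `ℂ[B]`, the Kronecker product,
viewed over `ℂ[A × B]` via `x ⊗ y ↦ ∑ x(a) y(b) · (a,b)`, satisfies
`HS(M ⊗ N)(a, b) = HS(M)(a) · HS(N)(b)`. -/
theorem stmt_7 {A B : Type*} [Group A] [Group B] {m n : ℕ}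
    (M : Matrix (Fin m) (Fin m) (MonoidAlgebra ℂ A))
    (N : Matrix (Fin n) (Fin n) (MonoidAlgebra ℂ B))
    (hM : M * M = M) (hN : N * N = N) (a : A) (b : B) :
    (∑ p : Fin m × Fin n, ∑ᶠ t ∈ {t : A × B | IsConj (a, b) t},
        ((M p.1 p.1).coeff.sum fun x cx => (N p.2 p.2).coeff.sum fun y cy =>
          (Finsupp.single (x, y) (cx * cy) : (A × B) →₀ ℂ)) t) =
      (∑ i, ∑ᶠ t ∈ {t : A | IsConj a t}, (M i i).coeff t) *
        (∑ j, ∑ᶠ t ∈ {t : B | IsConj b t}, (N j j).coeff t) :=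
  stmt_7_general M N a b
end

section
/- Let G be a group and M an n×n idempotent matrix over ℂ[G] with only finitely many group elements appearing with nonzero coefficient among all entries. Then the sum over all conjugacy classes [s] of G of HS(M)(s) equals the ordinary trace of the idempotent complex matrix ε(M), where ε is the augmentation; in particular this sum is a nonnegative integer. -/
/-! Conjugacy classes partition `G`, so summing `HS(M)` over all classes gives back the sum of all
coefficients of the diagonal entries, i.e. the trace of the augmented matrix `ε(M)`. Since `ε` is a
ring homomorphism, `ε(M)` is an idempotent complex matrix, and the trace of an idempotent is the
dimension of its range. -/

open Function

section Fiberwise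

variable {α β M : Type*} [AddCommMonoid M]

theorem hasFiniteSupport_finsum_mem_fiber {f : α → M} (g : α → β) (hf : HasFiniteSupport f) :
    HasFiniteSupport fun b ↦ ∑ᶠ a ∈ {a | g a = b}, f a := by
  refine (Set.Finite.image g hf).subset fun b hb ↦ ?_
  obtain ⟨a, ha, hfa⟩ := exists_ne_zero_of_finsum_mem_ne_zero hb
  exact ⟨a, hfa, ha⟩

theorem finsum_finsum_mem_fiber {f : α → M} (g : α → β) (hf : HasFiniteSupport f) :
    ∑ᶠ b, ∑ᶠ a ∈ {a | g a = b}, f a = ∑ᶠ a, f a := by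
  classical
  set s := hf.toFinset
  have hfiber (b : β) : ∑ᶠ a ∈ {a | g a = b}, f a = ∑ a ∈ s with g a = b, f a :=
    finsum_mem_eq_sum_of_inter_support_eq _ (by ext; simp [s, Set.Finite.mem_toFinset hf, and_comm])
  rw [finsum_congr hfiber,
    finsum_eq_sum_of_support_subset _ (s.support_of_fiberwise_sum_subset_image f g),
    Finset.sum_fiberwise_of_maps_to fun a ha ↦ Finset.mem_image_of_mem g ha,
    finsum_eq_sum_of_support_subset f (s := s) fun a ↦ (Set.Finite.mem_toFinset hf).mpr]

end Fiberwise

theorem MonoidAlgebra.lift_one_apply_eq_finsum {k G : Type*} [CommSemiring k] [Monoid G]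
    (f : MonoidAlgebra k G) : lift k k G 1 f = ∑ᶠ g, f.coeff g := by
  rw [lift_apply, finsum_eq_sum_of_support_subset _ (s := f.coeff.support) (by simp)]
  simp [Finsupp.sum]

theorem Matrix.trace_eq_finrank_range_of_isIdempotentElem {K m : Type*} [Field K] [Fintype m]
    [DecidableEq m] {E : Matrix m m K} (hE : IsIdempotentElem E) :
    E.trace = Module.finrank K (LinearMap.range (Matrix.toLin' E)) := by
  have hφ : IsIdempotentElem (Matrix.toLin' E) := hE.map Matrix.toLinAlgEquiv'
  rw [← (LinearMap.IsIdempotentElem.isProj_range _ hφ).trace,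
    LinearMap.trace_eq_matrix_trace K (Pi.basisFun K m), LinearMap.toMatrix_eq_toMatrix',
    LinearMap.toMatrix'_toLin']

theorem stmt_8_general {G : Type*} [Group G] {n : ℕ}
    (M : Matrix (Fin n) (Fin n) (MonoidAlgebra ℂ G)) (hM : M * M = M) :
    (∑ᶠ c : ConjClasses G, ∑ i, ∑ᶠ t ∈ {t : G | ConjClasses.mk t = c}, (M i i).coeff t) =
        (M.map (MonoidAlgebra.lift ℂ ℂ G 1)).trace ∧
      ∃ r : ℕ, (M.map (MonoidAlgebra.lift ℂ ℂ G 1)).trace = (r : ℂ) := by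
  set ε := MonoidAlgebra.lift ℂ ℂ G 1
  have hidem : IsIdempotentElem (M.map ε) := by
    rw [IsIdempotentElem, ← AlgHom.coe_toRingHom ε, ← Matrix.map_mul, hM]
  refine ⟨?_, _, Matrix.trace_eq_finrank_range_of_isIdempotentElem hidem⟩
  rw [finsum_sum_comm _ _ fun i _ ↦
      hasFiniteSupport_finsum_mem_fiber _ (M i i).coeff.hasFiniteSupport, Matrix.trace]
  refine Finset.sum_congr rfl fun i _ ↦ ?_
  rw [finsum_finsum_mem_fiber _ (M i i).coeff.hasFiniteSupport, Matrix.diag_apply,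
    Matrix.map_apply, MonoidAlgebra.lift_one_apply_eq_finsum]

/-- For an idempotent matrix `M` over `ℂ[G]` whose entries involve only finitely many
group elements, the sum over all conjugacy classes of `HS(M)(s)` equals the trace of
the idempotent complex matrix obtained by applying the augmentation entrywise; in
particular this sum is a nonnegative integer. -/
theorem stmt_8 {G : Type*} [Group G] {n : ℕ}
    (M : Matrix (Fin n) (Fin n) (MonoidAlgebra ℂ G)) (hM : M * M = M)
    (hfin : (⋃ i, ⋃ j, ((M i j).coeff.support : Set G)).Finite) :
    (∑ᶠ c : ConjClasses G, ∑ i, ∑ᶠ t ∈ {t : G | ConjClasses.mk t = c}, (M i i).coeff t) =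
        (M.map (MonoidAlgebra.lift ℂ ℂ G 1)).trace ∧
      ∃ r : ℕ, (M.map (MonoidAlgebra.lift ℂ ℂ G 1)).trace = (r : ℂ) :=
  stmt_8_general M hM
end

section
/- Let G be a finite group and s ∈ G. If P is a finitely generated projective ℂ[G]-module represented by an idempotent matrix M over ℂ[G], then HS(P)(1) = dim_ℂ(P)/|G|; in particular the value of the Hattori–Stallings rank at the identity of a finitely generated projective module over the group ring of a finite group is a positive rational with denominator dividing |G|. -/
/-!
The map `x ↦ x ᵥ* M` on `ℂ[G]ⁿ` is a ℂ-linear idempotent with image `P`, so its trace is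
`dim_ℂ P`. Computed blockwise, the trace is `∑ i, tr(y ↦ y * M i i)`, and in the basis `G` of
`ℂ[G]` right multiplication by `a` has diagonal entries `(g * a)(g) = a(1)`, so each block
contributes `|G| · (M i i)(1)`.
-/

open LinearMap

namespace Matrix

variable (k : Type*) {A m n : Type*} [CommRing k] [Ring A] [Algebra k A] [Fintype m] [Fintype n]

-- Written as a sum of block maps `A → A` so that its trace can be taken block by block.
def vecMulₗ [DecidableEq n] (M : Matrix m n A) : (m → A) →ₗ[k] (n → A) :=
  ∑ i, ∑ j, LinearMap.single k (fun _ => A) j ∘ₗ mulRight k (M i j) ∘ₗ proj i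

@[simp]
theorem vecMulₗ_apply [DecidableEq n] (M : Matrix m n A) (x : m → A) :
    vecMulₗ k M x = x ᵥ* M := by
  ext j
  simp [vecMulₗ, vecMul, dotProduct]

theorem range_vecMulₗ [DecidableEq n] (M : Matrix m n A) :
    range (vecMulₗ k M) = Submodule.span k (Set.range fun x => x ᵥ* M) := by
  rw [← Submodule.span_eq (range (vecMulₗ k M)), coe_range]
  congr 2
  exact funext (vecMulₗ_apply k M)

theorem isIdempotentElem_vecMulₗ [DecidableEq m] {M : Matrix m m A} (hM : IsIdempotentElem M) :
    IsIdempotentElem (vecMulₗ k M) := by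
  refine LinearMap.ext fun x => ?_
  simp only [Module.End.mul_apply, vecMulₗ_apply, vecMul_vecMul, hM.eq]

theorem trace_vecMulₗ [DecidableEq m] [Module.Free k A] [Module.Finite k A] (M : Matrix m m A) :
    LinearMap.trace k _ (vecMulₗ k M) = ∑ i, LinearMap.trace k A (mulRight k (M i i)) := by
  simp only [vecMulₗ, map_sum]
  refine Finset.sum_congr rfl fun i _ => ?_
  rw [Finset.sum_eq_single i]
  · rw [trace_comp_comm', comp_assoc, proj_comp_single_same, comp_id]
  · intro j _ hji
    rw [trace_comp_comm', comp_assoc, proj_comp_single_ne k _ i j hji.symm, comp_zero, map_zero]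
  · simp

end Matrix

theorem MonoidAlgebra.trace_mulRight {k G : Type*} [CommRing k] [Group G] [Fintype G]
    (x : MonoidAlgebra k G) :
    trace k _ (mulRight k x) = Fintype.card G * x.coeff 1 := by
  classical
  rw [trace_eq_matrix_trace k (MonoidAlgebra.basis G k), Matrix.trace]
  have hdiag (g : G) : (basis G k).repr (single g 1 * x) g = x.coeff 1 := by
    change (single g 1 * x).coeff g = _
    simp
  simp [toMatrix_apply, hdiag]

theorem LinearMap.IsIdempotentElem.trace_eq_finrank_range {K V : Type*} [Field K]
    [AddCommGroup V] [Module K V] [FiniteDimensional K V] {f : V →ₗ[K] V}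
    (hf : IsIdempotentElem f) :
    trace K V f = Module.finrank K (range f) :=
  hf.isProj_range.trace

/-- For a finite group `G` and an idempotent matrix `M` over `ℂ[G]` representing the
finitely generated projective module `P = ℂ[G]ⁿ · M`, the Hattori–Stallings rank at
the identity is `HS(P)(1) = dim_ℂ P / |G|`. -/
theorem stmt_14 {G : Type*} [Group G] [Fintype G] {n : ℕ}
    (M : Matrix (Fin n) (Fin n) (MonoidAlgebra ℂ G)) (hM : M * M = M) :
    ∑ i, (M i i).coeff (1 : G) =
      (Module.finrank ℂ (Submodule.span ℂ (Set.range
          fun x : Fin n → MonoidAlgebra ℂ G => Matrix.vecMul x M)) : ℂ) /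
        (Fintype.card G : ℂ) := by
  have htrace : trace ℂ _ (M.vecMulₗ ℂ) = Fintype.card G * ∑ i, (M i i).coeff 1 := by
    simp only [Matrix.trace_vecMulₗ, MonoidAlgebra.trace_mulRight, Finset.mul_sum]
  rw [← Matrix.range_vecMulₗ,
    ← (Matrix.isIdempotentElem_vecMulₗ ℂ hM).trace_eq_finrank_range, htrace]
  field_simp
end
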